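/- Let K be a field of characteristic 2 with Tits endomorphism θ (θ² = Frobenius) and θ-invariant real valuation ν (ν(x^θ) = √2 ν(x)). On K × K define the group operation (s,t)*(u,v) = (s + u + t^θ v, t + v) and the norm R(s,t) = t^{θ+2} + st + s^θ. Then ν(R((s,t)*(u,v))) ≥ min{ν(R(s,t)), ν(R(u,v))} for all (s,t), (u,v) ∈ K × K (with ν(0) = +∞). -/

import Mathlib

/-!
Write `A = ν(s^θ)`, `B = ν(t^θ t²)` and `C = ν(st)`. Since `√2·C = A + (√2 - 1)·B`, the value `C`
is a proper convex combination of `A` and `B`. Hence `ν(R(s,t)) = min(A, B)`: if `A ≠ B`, the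
smaller one is the strict minimum of the three monomials, and if `A = B` the identity
`s·(R + s^θ) = t·(R^θ + t^θ R)` rules out cancellation. The same convexity bounds each cross term of
`R((s,t)*(u,v)) = R(s,t) + R(u,v) + sv + ut + t^θ t v` below by `min(ν R(s,t), ν R(u,v))`, the
last one because `(t^θ t)^θ = t^θ t²`.
-/

lemma sqrt_two_mul_add_eq (a b : ℝ) :
    √2 * (a + b) = √2 * a + (√2 - 1) * ((2 + √2) * b) := by
  have h : √2 * √2 = 2 := Real.mul_self_sqrt zero_le_two
  linear_combination -b * h

lemma min_le_add_of_sqrt_two (a b : ℝ) : min (√2 * a) ((2 + √2) * b) ≤ a + b := by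
  have key := sqrt_two_mul_add_eq a b
  have h1 : 1 < √2 := by rw [Real.lt_sqrt zero_le_one]; norm_num
  by_contra! h
  obtain ⟨hX, hY⟩ := lt_min_iff.mp h
  nlinarith

lemma min_lt_add_of_sqrt_two {a b : ℝ} (h : √2 * a ≠ (2 + √2) * b) :
    min (√2 * a) ((2 + √2) * b) < a + b := by
  have key := sqrt_two_mul_add_eq a b
  have h1 : 1 < √2 := by rw [Real.lt_sqrt zero_le_one]; norm_num
  rcases h.lt_or_gt with hlt | hgt
  · rw [min_eq_left hlt.le]; nlinarith
  · rw [min_eq_right hgt.le]; nlinarith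

section

variable {K : Type*} [Field K]

structure IsTitsValuation (θ : K →+* K) (ν : K → EReal) : Prop where
  map_zero : ν 0 = ⊤
  ne_top : ∀ x : K, x ≠ 0 → ν x ≠ ⊤
  ne_bot : ∀ x : K, ν x ≠ ⊥
  map_mul : ∀ a b : K, ν (a * b) = ν a + ν b
  min_le_map_add : ∀ a b : K, min (ν a) (ν b) ≤ ν (a + b)
  map_theta : ∀ x : K, ν (θ x) = ((√2 : ℝ) : EReal) * ν x

def suzukiNorm (θ : K →+* K) (s t : K) : K := θ t * t ^ 2 + s * t + θ s

section CharTwo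
variable [CharP K 2] {θ : K →+* K}

lemma suzukiNorm_mul (hθ : ∀ x, θ (θ x) = x ^ 2) (s t u v : K) :
    suzukiNorm θ (s + u + θ t * v) (t + v) =
      suzukiNorm θ s t + suzukiNorm θ u v + (s * v + u * t + θ t * t * v) := by
  simp only [suzukiNorm, map_add, map_mul, hθ]
  linear_combination (θ t * v ^ 2 + θ v * t ^ 2 + θ t * t * v + θ v * t * v) *
    CharTwo.two_eq_zero (R := K)

lemma mul_suzukiNorm_add_theta (hθ : ∀ x, θ (θ x) = x ^ 2) (s t : K) :
    s * (suzukiNorm θ s t + θ s) = t * (θ (suzukiNorm θ s t) + θ t * suzukiNorm θ s t) := by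
  simp only [suzukiNorm, map_add, map_mul, map_pow, hθ]
  linear_combination (s * θ s - t ^ 3 * θ t ^ 2 - t * θ s * θ t) * CharTwo.two_eq_zero (R := K)

end CharTwo

namespace IsTitsValuation

variable {θ : K →+* K} {ν : K → EReal}

lemma exists_eq_coe (hν : IsTitsValuation θ ν) {x : K} (hx : x ≠ 0) : ∃ a : ℝ, ν x = a :=
  ⟨(ν x).toReal, (EReal.coe_toReal (hν.ne_top x hx) (hν.ne_bot x)).symm⟩

lemma le_map_add (hν : IsTitsValuation θ ν) {c : EReal} {x y : K} (hx : c ≤ ν x)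
    (hy : c ≤ ν y) : c ≤ ν (x + y) :=
  (le_min hx hy).trans (hν.min_le_map_add x y)

lemma map_theta_of_eq (hν : IsTitsValuation θ ν) {x : K} {a : ℝ} (h : ν x = a) :
    ν (θ x) = ((√2 * a : ℝ) : EReal) := by
  rw [hν.map_theta, h, EReal.coe_mul]

lemma map_mul_of_eq (hν : IsTitsValuation θ ν) {x y : K} {a b : ℝ} (hx : ν x = a)
    (hy : ν y = b) : ν (x * y) = ((a + b : ℝ) : EReal) := by
  rw [hν.map_mul, hx, hy, EReal.coe_add]

lemma map_theta_mul_sq_of_eq (hν : IsTitsValuation θ ν) {x : K} {a : ℝ} (h : ν x = a) :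
    ν (θ x * x ^ 2) = (((2 + √2) * a : ℝ) : EReal) := by
  rw [sq, hν.map_mul_of_eq (hν.map_theta_of_eq h) (hν.map_mul_of_eq h h)]
  congr 1
  ring

lemma min_le_map_mul (hν : IsTitsValuation θ ν) (x y : K) :
    min (ν (θ x)) (ν (θ y * y ^ 2)) ≤ ν (x * y) := by
  rcases eq_or_ne x 0 with rfl | hx
  · simp [hν.map_zero]
  rcases eq_or_ne y 0 with rfl | hy
  · simp [hν.map_zero]
  obtain ⟨a, ha⟩ := hν.exists_eq_coe hx
  obtain ⟨b, hb⟩ := hν.exists_eq_coe hy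
  rw [hν.map_theta_of_eq ha, hν.map_theta_mul_sq_of_eq hb, hν.map_mul_of_eq ha hb,
    ← EReal.coe_strictMono.monotone.map_min, EReal.coe_le_coe_iff]
  exact min_le_add_of_sqrt_two a b

variable [CharP K 2]

lemma map_add_eq_of_lt (hν : IsTitsValuation θ ν) {x y : K} (h : ν y < ν x) :
    ν (x + y) = ν y := by
  have hle : ν y ≤ ν (x + y) := hν.le_map_add h.le le_rfl
  have hge : min (ν (x + y)) (ν x) ≤ ν y := by
    simpa only [add_right_comm x y x, CharTwo.add_self_eq_zero, zero_add] using
      hν.min_le_map_add (x + y) x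
  rcases min_le_iff.mp hge with h' | h'
  · exact le_antisymm h' hle
  · exact absurd h' h.not_ge

lemma map_add_add_eq_of_lt (hν : IsTitsValuation θ ν) {x y z : K}
    (hx : ν z < ν x) (hy : ν z < ν y) : ν (x + y + z) = ν z :=
  hν.map_add_eq_of_lt ((lt_min hx hy).trans_le (hν.min_le_map_add x y))

lemma map_suzukiNorm_le_of_eq (hν : IsTitsValuation θ ν) (hθ : ∀ x, θ (θ x) = x ^ 2)
    {s t : K} {a b : ℝ} (hs : ν s = a) (ht : ν t = b) (hab : √2 * a = (2 + √2) * b) :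
    ν (suzukiNorm θ s t) ≤ ν (θ s) := by
  -- If `ν N > ν(s^θ)`, the left side of `mul_suzukiNorm_add_theta` has valuation
  -- `(1 + √2)·ν s`, while its right side has a strictly larger one.
  have hA := hν.map_theta_of_eq hs
  by_contra! hlt
  set N := suzukiNorm θ s t
  have hs0 : s ≠ 0 := by
    rintro rfl
    exact EReal.coe_ne_top a (hs.symm.trans hν.map_zero)
  have hN : N ≠ 0 := by
    intro h
    have hid := mul_suzukiNorm_add_theta hθ s t
    rw [show suzukiNorm θ s t = 0 from h, zero_add, θ.map_zero, zero_add, mul_zero, mul_zero] at hid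
    exact hs0 ((mul_eq_zero.mp hid).elim id (map_eq_zero θ).mp)
  obtain ⟨r, hr⟩ := hν.exists_eq_coe hN
  have hrA : √2 * a < r := by rwa [hA, hr, EReal.coe_lt_coe_iff] at hlt
  have hlhs : ν (s * (N + θ s)) = ((a + √2 * a : ℝ) : EReal) :=
    hν.map_mul_of_eq hs ((hν.map_add_eq_of_lt hlt).trans hA)
  have hrhs : ((b + min (√2 * r) (√2 * b + r) : ℝ) : EReal) ≤
      ν (t * (θ N + θ t * N)) := by
    rw [hν.map_mul, ht, EReal.coe_add, EReal.coe_strictMono.monotone.map_min]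
    gcongr
    exact hν.le_map_add (min_le_left _ _ |>.trans_eq (hν.map_theta_of_eq hr).symm)
      (min_le_right _ _ |>.trans_eq (hν.map_mul_of_eq (hν.map_theta_of_eq ht) hr).symm)
  rw [← mul_suzukiNorm_add_theta hθ, hlhs, EReal.coe_le_coe_iff] at hrhs
  have h2 : √2 * √2 = 2 := Real.mul_self_sqrt zero_le_two
  have hab' : a = b + √2 * b := by linear_combination (√2 / 2) * hab + (b - a) / 2 * h2
  rcases min_choice (√2 * r) (√2 * b + r) with hm | hm <;> rw [hm] at hrhs
  · nlinarith [mul_lt_mul_of_pos_left hrA (Real.sqrt_pos.mpr zero_lt_two)]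
  · linarith

lemma map_suzukiNorm (hν : IsTitsValuation θ ν) (hθ : ∀ x, θ (θ x) = x ^ 2) (s t : K) :
    ν (suzukiNorm θ s t) = min (ν (θ s)) (ν (θ t * t ^ 2)) := by
  refine le_antisymm ?_ (hν.le_map_add (hν.le_map_add (min_le_right (ν (θ s)) _)
    (hν.min_le_map_mul s t)) (min_le_left _ _))
  rcases eq_or_ne s 0 with rfl | hs
  · simp [suzukiNorm, hν.map_zero]
  rcases eq_or_ne t 0 with rfl | ht
  · simp [suzukiNorm, hν.map_zero]
  obtain ⟨a, ha⟩ := hν.exists_eq_coe hs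
  obtain ⟨b, hb⟩ := hν.exists_eq_coe ht
  have hA := hν.map_theta_of_eq ha
  have hB := hν.map_theta_mul_sq_of_eq hb
  have hC := hν.map_mul_of_eq ha hb
  rcases lt_trichotomy (√2 * a) ((2 + √2) * b) with hAB | hAB | hBA
  · have hAC := min_eq_left hAB.le ▸ min_lt_add_of_sqrt_two hAB.ne
    rw [suzukiNorm, hν.map_add_add_eq_of_lt (by rw [hA, hB]; exact_mod_cast hAB)
      (by rw [hA, hC]; exact_mod_cast hAC)]
    exact le_min le_rfl (by rw [hA, hB]; exact_mod_cast hAB.le)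
  · refine le_min (hν.map_suzukiNorm_le_of_eq hθ ha hb hAB) ?_
    rw [hB, ← hAB, ← hA]
    exact hν.map_suzukiNorm_le_of_eq hθ ha hb hAB
  · have hBC := min_eq_right hBA.le ▸ min_lt_add_of_sqrt_two hBA.ne'
    rw [show suzukiNorm θ s t = θ s + s * t + θ t * t ^ 2 by rw [suzukiNorm]; ring,
      hν.map_add_add_eq_of_lt (by rw [hA, hB]; exact_mod_cast hBA)
        (by rw [hB, hC]; exact_mod_cast hBC)]
    exact le_min (by rw [hA, hB]; exact_mod_cast hBA.le) le_rfl

end IsTitsValuation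

end

/-- For a field `K` of characteristic 2 with Tits endomorphism `θ` and a `θ`-invariant
valuation `ν`, the Suzuki norm `R(s,t) = t^{θ+2} + st + s^θ` is sub-multiplicative for the
group operation `(s,t)*(u,v) = (s + u + t^θ v, t + v)` on `K × K`:
`ν(R((s,t)*(u,v))) ≥ min{ν(R(s,t)), ν(R(u,v))}`. -/
theorem stmt9 {K : Type*} [Field K] [CharP K 2]
    (θ : K →+* K) (hθ : ∀ x, θ (θ x) = x ^ 2)
    (ν : K → EReal) (hν0 : ν 0 = ⊤)
    (hνtop : ∀ x : K, x ≠ 0 → ν x ≠ ⊤) (hνbot : ∀ x : K, ν x ≠ ⊥)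
    (hνmul : ∀ a b : K, ν (a * b) = ν a + ν b)
    (hνadd : ∀ a b : K, min (ν a) (ν b) ≤ ν (a + b))
    (hνθ : ∀ x : K, ν (θ x) = ((Real.sqrt 2 : ℝ) : EReal) * ν x)
    (R : K → K → K) (hR : ∀ a b, R a b = θ b * b ^ 2 + a * b + θ a)
    (s t u v : K) :
    min (ν (R s t)) (ν (R u v)) ≤ ν (R (s + u + θ t * v) (t + v)) := by
  have hν : IsTitsValuation θ ν := ⟨hν0, hνtop, hνbot, hνmul, hνadd, hνθ⟩
  obtain rfl : R = suzukiNorm θ := funext₂ hR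
  rw [suzukiNorm_mul hθ]
  set m := min (ν (suzukiNorm θ s t)) (ν (suzukiNorm θ u v))
  obtain ⟨hs, ht⟩ : m ≤ ν (θ s) ∧ m ≤ ν (θ t * t ^ 2) :=
    le_min_iff.mp (hν.map_suzukiNorm hθ s t ▸ min_le_left _ _)
  obtain ⟨hu, hv⟩ : m ≤ ν (θ u) ∧ m ≤ ν (θ v * v ^ 2) :=
    le_min_iff.mp (hν.map_suzukiNorm hθ u v ▸ min_le_right _ _)
  have hθtt : θ (θ t * t) = θ t * t ^ 2 := by rw [map_mul, hθ, mul_comm]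
  refine hν.le_map_add (hν.le_map_add (min_le_left _ _) (min_le_right _ _)) ?_
  refine hν.le_map_add (hν.le_map_add ?_ ?_) ?_
  · exact (le_min hs hv).trans (hν.min_le_map_mul s v)
  · exact (le_min hu ht).trans (hν.min_le_map_mul u t)
  · have hcross := hν.min_le_map_mul (θ t * t) v
    rw [hθtt] at hcross
    exact (le_min ht hv).trans hcross
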